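/- arXiv:2304.08037 — 3 statements merged into one kernel-verified Lean document; each statement's English description precedes it below -/
import Mathlib

section
/- For any field L and any invertible n×n matrix A over the ring of Laurent polynomials L[x, x⁻¹], there exist an invertible matrix B over L[x] and an invertible matrix C over L[x⁻¹] such that B·A·C is the diagonal matrix diag(x^{d₁}, ..., x^{dₙ}) for some integers d₁ ≥ d₂ ≥ ... ≥ dₙ. -/
/-!
Clearing denominators, `T ^ N • A` is a polynomial matrix `A'` whose determinant is a unit of
`L[T;T⁻¹]`. Row operations over `L[X]` make `A'` row reduced: writing `rᵢ` for the largest degree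
in row `i`, the matrix of the coefficients of `X ^ rᵢ` in row `i` becomes nonsingular, because a
kernel vector of it gives a row operation that lowers `∑ rᵢ`. A row reduced `B = U * A'` factors
as `diag(T ^ rᵢ) * E(T⁻¹)`, where `E` reverses row `i` at degree `rᵢ`. The constant term of
`det E` is the determinant of that leading coefficient matrix, so it is nonzero, while
`det E(T⁻¹)` is a unit of `L[T;T⁻¹]`; together these force `det E` to be a nonzero constant.
Thus `U * A * E(T⁻¹)⁻¹ = diag(T ^ (rᵢ - N))`, and permuting rows and columns sorts the exponents.
-/

open Matrix LaurentPolynomial Polynomial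

namespace Polynomial

section CommSemiring

variable {R : Type*} [CommSemiring R]

/-- `X ↦ T⁻¹`, identifying `R[X]` with the subring `R[T⁻¹]` of `R[T;T⁻¹]`. -/
noncomputable def toLaurentInv : R[X] →+* R[T;T⁻¹] :=
  eval₂RingHom LaurentPolynomial.C (T (-1))

theorem toLaurentInv_apply (p : R[X]) : toLaurentInv p = invert (toLaurent p) := by
  have : toLaurentInv = (invert : R[T;T⁻¹] ≃ₐ[R] R[T;T⁻¹]).toRingHom.comp toLaurent := by
    ext <;> simp [toLaurentInv]
  exact DFunLike.congr_fun this p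

theorem toLaurent_reflect {N : ℕ} {p : R[X]} (hp : p.natDegree ≤ N) :
    toLaurent (p.reflect N) = T N * invert (toLaurent p) := by
  refine induction_with_natDegree_le (fun p => toLaurent (p.reflect N) = T N * invert (toLaurent p))
    N (by simp) (fun k r _ hk => ?_) (fun f g _ _ hf hg => ?_) p hp
  · rw [reflect_C_mul_X_pow, revAt_le hk, toLaurent_C_mul_X_pow, toLaurent_C_mul_X_pow,
      map_mul, invert_C, invert_T, mul_left_comm, ← T_add, Nat.cast_sub hk, sub_eq_add_neg]
  · rw [reflect_add, map_add, hf, hg, map_add, map_add, mul_add]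

end CommSemiring

theorem isUnit_of_isUnit_toLaurent {R : Type*} [CommRing R] [IsDomain R] {p : R[X]}
    (hp : IsUnit (toLaurent p)) (h0 : p.coeff 0 ≠ 0) : IsUnit p := by
  obtain ⟨g, hg⟩ := hp.exists_right_inv
  obtain ⟨m, q, hq⟩ := exists_T_pow g
  have hdvd : p ∣ X ^ m := by
    refine ⟨q, toLaurent_injective ?_⟩
    rw [toLaurent_X_pow, map_mul, hq, ← mul_assoc, hg, one_mul]
  obtain ⟨_ | i, -, hi⟩ := (dvd_prime_pow prime_X m).mp hdvd
  · exact associated_one_iff_isUnit.mp (by simpa using hi)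
  · exact absurd (X_dvd_iff.mp ((dvd_pow_self X i.succ_ne_zero).trans hi.symm.dvd)) h0

end Polynomial

namespace Matrix

variable {R l m n o p q : Type*}

theorem exists_map_toLaurent_eq_T_smul [CommSemiring R] [Fintype m] [Fintype n]
    (A : Matrix m n R[T;T⁻¹]) :
    ∃ (N : ℕ) (A' : Matrix m n R[X]), A'.map toLaurent = (T N : R[T;T⁻¹]) • A := by
  choose k P hP using fun i j => exists_T_pow (A i j)
  set N := Finset.univ.sup fun ij : m × n => k ij.1 ij.2
  have hk (i : m) (j : n) : k i j ≤ N :=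
    Finset.le_sup (f := fun ij : m × n => k ij.1 ij.2) (Finset.mem_univ (i, j))
  refine ⟨N, of fun i j => P i j * X ^ (N - k i j), Matrix.ext fun i j => ?_⟩
  rw [map_apply, of_apply, map_mul, hP, toLaurent_X_pow, mul_assoc, ← T_add, ← Nat.cast_add,
    Nat.add_sub_cancel' (hk i j), smul_apply, smul_eq_mul, mul_comm]

theorem submatrix_mul_mul_submatrix [Fintype n] [Fintype o] [NonUnitalNonAssocSemiring R]
    (P : Matrix m n R) (M : Matrix n o R) (Q : Matrix o p R) (e : l → m) (f : q → p) :
    P.submatrix e id * M * Q.submatrix id f = (P * M * Q).submatrix e f :=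
  rfl

section RowDegree

variable [Fintype n]

def rowNatDegree [Semiring R] (A : Matrix m n R[X]) (i : m) : ℕ :=
  Finset.univ.sup fun j => (A i j).natDegree

def leadingRowCoeff [Semiring R] (A : Matrix m n R[X]) : Matrix m n R :=
  of fun i j => (A i j).coeff (A.rowNatDegree i)

noncomputable def reflectRows [Semiring R] (A : Matrix m n R[X]) : Matrix m n R[X] :=
  of fun i j => (A i j).reflect (A.rowNatDegree i)

theorem natDegree_le_rowNatDegree [Semiring R] (A : Matrix m n R[X]) (i : m) (j : n) :
    (A i j).natDegree ≤ A.rowNatDegree i :=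
  Finset.le_sup (f := fun j => (A i j).natDegree) (Finset.mem_univ j)

theorem coeff_zero_reflectRows [Semiring R] (A : Matrix m n R[X]) (i : m) (j : n) :
    (A.reflectRows i j).coeff 0 = A.leadingRowCoeff i j := by
  simp [reflectRows, leadingRowCoeff, coeff_reflect]

theorem map_toLaurent_eq_diagonal_mul_reflectRows [CommSemiring R] [Fintype m] [DecidableEq m]
    (A : Matrix m n R[X]) :
    A.map toLaurent =
      diagonal (fun i => (T (A.rowNatDegree i) : R[T;T⁻¹])) * A.reflectRows.map toLaurentInv := by
  refine Matrix.ext fun i j => ?_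
  rw [diagonal_mul, map_apply, map_apply, toLaurentInv_apply, reflectRows, of_apply,
    toLaurent_reflect (A.natDegree_le_rowNatDegree i j), map_mul, invert_T, ← mul_assoc, ← T_add,
    add_neg_cancel, T_zero, one_mul, involutive_invert]

theorem isUnit_det_reflectRows [CommRing R] [IsDomain R] [DecidableEq n] (A : Matrix n n R[X])
    (hA : IsUnit (toLaurent A.det)) (hlead : A.leadingRowCoeff.det ≠ 0) :
    IsUnit A.reflectRows.det := by
  refine isUnit_of_isUnit_toLaurent ?_ ?_
  · have h := congrArg det (map_toLaurent_eq_diagonal_mul_reflectRows A)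
    rw [det_mul, det_diagonal, ← RingHom.mapMatrix_apply, ← RingHom.map_det,
      ← RingHom.mapMatrix_apply, ← RingHom.map_det, toLaurentInv_apply] at h
    rw [h] at hA
    exact (isUnit_map_iff invert _).mp (isUnit_of_mul_isUnit_right hA)
  · have : A.reflectRows.map constantCoeff = A.leadingRowCoeff :=
      Matrix.ext A.coeff_zero_reflectRows
    rwa [← constantCoeff_apply, RingHom.map_det, RingHom.mapMatrix_apply, this]

theorem degree_vecMul_lt_rowNatDegree [CommSemiring R] [Fintype m] (A : Matrix m n R[X])
    {v : m → R} (hv : v ᵥ* A.leadingRowCoeff = 0) {i : m}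
    (hi : ∀ k, v k ≠ 0 → A.rowNatDegree k ≤ A.rowNatDegree i) (j : n) :
    (((fun k => monomial (A.rowNatDegree i - A.rowNatDegree k) (v k)) ᵥ* A) j).degree <
      A.rowNatDegree i := by
  refine degree_lt_iff_coeff_zero _ _ |>.mpr fun d hd => ?_
  obtain ⟨t, rfl⟩ := Nat.exists_eq_add_of_le (by exact_mod_cast hd : A.rowNatDegree i ≤ d)
  have hterm (k : m) : (monomial (A.rowNatDegree i - A.rowNatDegree k) (v k) * A k j).coeff
      (A.rowNatDegree i + t) = v k * (A k j).coeff (A.rowNatDegree k + t) := by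
    by_cases hvk : v k = 0
    · simp [hvk]
    · have hk := hi k hvk
      rw [show A.rowNatDegree i + t = A.rowNatDegree k + t + (A.rowNatDegree i - A.rowNatDegree k)
        by omega, coeff_monomial_mul]
  simp only [vecMul, dotProduct, finsetSum_coeff, hterm]
  rcases t with _ | t
  · simpa [vecMul, dotProduct, leadingRowCoeff] using congrFun hv j
  · refine Finset.sum_eq_zero fun k _ => ?_
    rw [coeff_eq_zero_of_natDegree_lt ((A.natDegree_le_rowNatDegree k j).trans_lt (by omega)),
      mul_zero]

theorem sum_rowNatDegree_updateRow_lt [Semiring R] [Fintype m] [DecidableEq m]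
    (A : Matrix m n R[X]) {i : m} {w : n → R[X]} (hw0 : w ≠ 0)
    (hw : ∀ j, (w j).degree < A.rowNatDegree i) :
    ∑ k, (A.updateRow i w).rowNatDegree k < ∑ k, A.rowNatDegree k := by
  obtain ⟨j₀, hj₀⟩ := Function.ne_iff.mp hw0
  have hpos : 0 < A.rowNatDegree i := by
    have := hw j₀
    rw [degree_eq_natDegree hj₀, Nat.cast_lt] at this
    exact (Nat.zero_le _).trans_lt this
  have hlt : (A.updateRow i w).rowNatDegree i < A.rowNatDegree i := by
    refine (Finset.sup_lt_iff hpos).mpr fun j _ => ?_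
    rw [updateRow_self]
    by_cases hwj : w j = 0
    · rwa [hwj, natDegree_zero]
    · exact (natDegree_lt_iff_degree_lt hwj).mpr (hw j)
  refine Finset.sum_lt_sum (fun k _ => ?_) ⟨i, Finset.mem_univ i, hlt⟩
  rcases eq_or_ne k i with rfl | hk
  · exact hlt.le
  · simp [rowNatDegree, updateRow_ne hk]

variable {K : Type*} [Field K] [DecidableEq n]

/- A kernel vector `v` of the leading coefficient matrix cancels the leading terms of the row `i`
of largest degree among those with `v i ≠ 0`, once that row is replaced by
`∑ₖ v k X ^ (rᵢ - rₖ) • (row k)`. -/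
theorem exists_sum_rowNatDegree_mul_lt (A : Matrix n n K[X]) (hA : A.det ≠ 0)
    (hlead : A.leadingRowCoeff.det = 0) :
    ∃ U : Matrix n n K[X], IsUnit U.det ∧ ∑ i, (U * A).rowNatDegree i < ∑ i, A.rowNatDegree i := by
  classical
  obtain ⟨v, hv0, hv⟩ := exists_vecMul_eq_zero_iff.mpr hlead
  obtain ⟨i, hvi, hi⟩ := (Finset.univ.filter fun k => v k ≠ 0).exists_max_image A.rowNatDegree
    (by simpa [Finset.filter_nonempty_iff, Function.ne_iff] using hv0)
  replace hvi : v i ≠ 0 := by simpa using hvi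
  set c : n → K[X] := fun k => monomial (A.rowNatDegree i - A.rowNatDegree k) (v k)
  set U : Matrix n n K[X] := (1 : Matrix n n K[X]).updateRow i c
  have hdetU : U.det = Polynomial.C (v i) := by
    rw [show U = updateRow 1 i (c ᵥ* 1) by rw [vecMul_one], vecMul_eq_sum, det_updateRow_sum,
      det_one, smul_eq_mul, mul_one]
    simp [c]
  have hUA : U * A = A.updateRow i (c ᵥ* A) := by rw [updateRow_mul, Matrix.one_mul]
  have hdetUA : (U * A).det ≠ 0 := by
    rw [det_mul, hdetU]
    exact mul_ne_zero (C_ne_zero.mpr hvi) hA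
  refine ⟨U, hdetU ▸ isUnit_C.mpr hvi.isUnit, hUA ▸ A.sum_rowNatDegree_updateRow_lt ?_
    (A.degree_vecMul_lt_rowNatDegree hv fun k hk => hi k (by simpa using hk))⟩
  intro h0
  rw [hUA, h0] at hdetUA
  exact hdetUA (det_eq_zero_of_row_eq_zero i fun j => by simp)

theorem exists_isUnit_det_leadingRowCoeff_mul_det_ne_zero (A : Matrix n n K[X])
    (hA : A.det ≠ 0) : ∃ U : Matrix n n K[X], IsUnit U.det ∧ (U * A).leadingRowCoeff.det ≠ 0 := by
  induction h : ∑ i, A.rowNatDegree i using Nat.strong_induction_on generalizing A with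
  | _ N ih =>
  by_cases hlead : A.leadingRowCoeff.det = 0
  · obtain ⟨U, hU, hlt⟩ := A.exists_sum_rowNatDegree_mul_lt hA hlead
    obtain ⟨V, hV, hVUA⟩ :=
      ih _ (h ▸ hlt) (U * A) (by rw [det_mul]; exact mul_ne_zero hU.ne_zero hA) rfl
    exact ⟨V * U, by rw [det_mul]; exact hV.mul hU, by rwa [Matrix.mul_assoc]⟩
  · exact ⟨1, by simp, by rwa [Matrix.one_mul]⟩

theorem exists_map_mul_mul_map_eq_diagonal_T (A : Matrix n n K[X])
    (hA : IsUnit (toLaurent A.det)) :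
    ∃ (U C : Matrix n n K[X]) (r : n → ℕ), IsUnit U.det ∧ IsUnit C.det ∧
      U.map toLaurent * A.map toLaurent * C.map toLaurentInv = diagonal fun i => T (r i) := by
  have hA0 : A.det ≠ 0 := fun h => not_isUnit_zero (by rwa [h, map_zero] at hA)
  obtain ⟨U, hU, hlead⟩ := A.exists_isUnit_det_leadingRowCoeff_mul_det_ne_zero hA0
  have hUA : IsUnit (toLaurent (U * A).det) := by
    rw [det_mul, map_mul]
    exact (hU.map _).mul hA
  have hE := (U * A).isUnit_det_reflectRows hUA hlead
  refine ⟨U, (U * A).reflectRows⁻¹, (U * A).rowNatDegree, hU, isUnit_nonsing_inv_det _ hE, ?_⟩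
  rw [← Matrix.map_mul, map_toLaurent_eq_diagonal_mul_reflectRows, Matrix.mul_assoc,
    ← Matrix.map_mul, mul_nonsing_inv _ hE, Matrix.map_one _ (map_zero _) (map_one _),
    Matrix.mul_one]

end RowDegree

end Matrix

theorem Tuple.exists_perm_antitone_comp {α : Type*} [LinearOrder α] {n : ℕ} (d : Fin n → α) :
    ∃ σ : Equiv.Perm (Fin n), Antitone (d ∘ σ) :=
  ⟨Tuple.sort (OrderDual.toDual ∘ d), monotone_toDual_comp_iff.mp (Tuple.monotone_sort _)⟩

/-- Dedekind–Weber: any `A ∈ GL(n, L[x,x⁻¹])` can be diagonalized to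
`diag(x^{d₁},…,x^{dₙ})` with `d₁ ≥ … ≥ dₙ` by `B ∈ GL(n, L[x])` on the left and
`C ∈ GL(n, L[x⁻¹])` on the right. -/
theorem dedekind_weber (L : Type*) [Field L] (n : ℕ)
    (A : Matrix (Fin n) (Fin n) (LaurentPolynomial L)) (hA : IsUnit A.det) :
    ∃ (B C : Matrix (Fin n) (Fin n) (Polynomial L)) (d : Fin n → ℤ),
      IsUnit B.det ∧ IsUnit C.det ∧ Antitone d ∧
      B.map (Polynomial.toLaurent : Polynomial L → LaurentPolynomial L) * A *
        C.map (fun p => Polynomial.eval₂ (LaurentPolynomial.C : L →+* LaurentPolynomial L)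
          (T (-1)) p) =
      Matrix.diagonal (fun i => T (d i)) := by
  obtain ⟨N, A', hA'⟩ := A.exists_map_toLaurent_eq_T_smul
  have hdetA' : IsUnit (toLaurent A'.det) := by
    rw [RingHom.map_det, RingHom.mapMatrix_apply, hA', det_smul]
    exact ((isUnit_T _).pow _).mul hA
  obtain ⟨U, C, r, hU, hC, hUAC⟩ := A'.exists_map_mul_mul_map_eq_diagonal_T hdetA'
  have hdiag : U.map toLaurent * A * C.map toLaurentInv =
      diagonal fun i => T ((r i : ℤ) - N) := by
    have h := congrArg ((T (-N : ℤ) : L[T;T⁻¹]) • ·) hUAC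
    simp only [hA', Matrix.mul_smul, Matrix.smul_mul, smul_smul, ← T_add, neg_add_cancel, T_zero,
      one_smul] at h
    rw [h, ← diagonal_smul]
    exact congrArg diagonal (funext fun i => by rw [Pi.smul_apply, smul_eq_mul, ← T_add,
      neg_add_eq_sub])
  obtain ⟨σ, hσ⟩ := Tuple.exists_perm_antitone_comp fun i => (r i : ℤ) - N
  have hsign : IsUnit ((Equiv.Perm.sign σ : ℤ) : L[X]) := σ.sign.isUnit.map (Int.castRingHom _)
  refine ⟨U.submatrix σ id, C.submatrix id σ, _, ?_, ?_, hσ, ?_⟩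
  · rw [det_permute]; exact hsign.mul hU
  · rw [det_permute']; exact hsign.mul hC
  · rw [← submatrix_map, ← submatrix_map, submatrix_mul_mul_submatrix]
    exact (congrArg (submatrix · σ σ) hdiag).trans (submatrix_diagonal_equiv _ σ)
end

section
/- For a negative integer k, if entire functions s₀, s₁ : ℂ → ℂ satisfy s₀(z) = z^k · s₁(1/z) for all z ≠ 0, then s₀ = 0 and s₁ = 0. -/
/-- `O(k)` on the Riemann sphere has no nonzero global sections for `k < 0`. -/
theorem sections_O_k_neg (k : ℤ) (hk : k < 0) (s₀ s₁ : ℂ → ℂ)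
    (h₀ : Differentiable ℂ s₀) (h₁ : Differentiable ℂ s₁)
    (h : ∀ z : ℂ, z ≠ 0 → s₀ z = z ^ k * s₁ (1 / z)) :
    s₀ = 0 ∧ s₁ = 0 := by
  obtain ⟨M, hM⟩ := (isCompact_closedBall (0:ℂ) 1).exists_bound_of_continuousOn
    h₁.continuous.continuousOn
  obtain ⟨C, hC⟩ := (isCompact_closedBall (0:ℂ) 1).exists_bound_of_continuousOn
    h₀.continuous.continuousOn
  have hM0 : 0 ≤ M := le_trans (norm_nonneg _) (hM 0 (by simp))
  -- key estimate for ‖z‖ ≥ 1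
  have key : ∀ z : ℂ, 1 ≤ ‖z‖ → ‖s₀ z‖ ≤ ‖z‖ ^ k * M := by
    intro z hz
    have hz0 : z ≠ 0 := by
      intro hzz; rw [hzz] at hz; simp at hz; linarith
    have h1z : (1 : ℂ) / z ∈ Metric.closedBall (0:ℂ) 1 := by
      simp only [Metric.mem_closedBall, dist_zero_right, norm_div, norm_one]
      rw [div_le_one (by positivity)]; simpa using hz
    rw [h z hz0, norm_mul, norm_zpow]
    exact mul_le_mul_of_nonneg_left (hM _ h1z) (by positivity)
  -- bounded
  have hbd : Bornology.IsBounded (Set.range s₀) := by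
    rw [isBounded_iff_forall_norm_le]
    refine ⟨max C M, ?_⟩
    rintro y ⟨z, rfl⟩
    rcases le_or_gt ‖z‖ 1 with hz | hz
    · exact le_max_of_le_left (hC z (by simpa [Metric.mem_closedBall] using hz))
    · refine le_max_of_le_right ?_
      calc ‖s₀ z‖ ≤ ‖z‖ ^ k * M := key z hz.le
        _ ≤ 1 * M := mul_le_mul_of_nonneg_right
            (zpow_le_one_of_nonpos₀ hz.le hk.le) hM0
        _ = M := one_mul M
  have hconst : ∀ z : ℂ, s₀ z = s₀ 0 := fun z =>
    h₀.apply_eq_apply_of_bounded hbd z 0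
  -- s₀ 0 = 0
  have hc : s₀ 0 = 0 := by
    have htend : Filter.Tendsto (fun n : ℕ => ((n:ℝ)) ^ k * M) Filter.atTop (nhds 0) := by
      have := (tendsto_zpow_atTop_zero (𝕜 := ℝ) hk).comp tendsto_natCast_atTop_atTop (α := ℕ)
      simpa using this.mul_const M
    have hev : ∀ᶠ n : ℕ in Filter.atTop, ‖s₀ 0‖ ≤ ((n:ℝ)) ^ k * M := by
      filter_upwards [Filter.eventually_ge_atTop 1] with n hn
      have h1 : (1:ℝ) ≤ ‖(n:ℂ)‖ := by
        simp only [Complex.norm_natCast]; exact_mod_cast hn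
      calc ‖s₀ 0‖ = ‖s₀ (n:ℂ)‖ := by rw [hconst (n:ℂ)]
        _ ≤ ‖(n:ℂ)‖ ^ k * M := key _ h1
        _ = ((n:ℝ)) ^ k * M := by rw [Complex.norm_natCast]
    have hle : ‖s₀ 0‖ ≤ 0 := ge_of_tendsto htend hev
    simpa using le_antisymm hle (norm_nonneg _)
  have hs0 : s₀ = 0 := funext fun z => by rw [hconst z, hc]; rfl
  refine ⟨hs0, ?_⟩
  have hne : Set.EqOn s₁ 0 {(0:ℂ)}ᶜ := by
    intro w hw
    have hw0 : w ≠ 0 := hw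
    have := h (1/w) (one_div_ne_zero hw0)
    rw [hs0, one_div_one_div] at this
    have hz : ((1:ℂ)/w) ^ k ≠ 0 := zpow_ne_zero _ (one_div_ne_zero hw0)
    have : (0:ℂ) = (1/w) ^ k * s₁ w := this
    have := (mul_eq_zero.mp this.symm).resolve_left hz
    simpa using this
  exact Continuous.ext_on (dense_compl_singleton 0) h₁.continuous continuous_const hne
end

section
/- If entire functions f₀, f₁ : ℂ → ℂ satisfy f₀(z) = −z^{-2} f₁(1/z) for all z ≠ 0, then f₀ = 0 and f₁ = 0. Consequently the space of global holomorphic 1-forms on the Riemann sphere is zero, i.e. the genus of the Riemann sphere is 0. -/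
/-!
The function `g z = z² f₀ z` is entire and equals `-f₁ (1/z)` off the origin, so it has a limit at
infinity; by Liouville it is constant, and `g 0 = 0` makes it zero. Hence `f₀` and `f₁` vanish
off the origin, and everywhere by continuity.
-/

open Filter Topology

theorem Differentiable.eq_const_of_eq_comp_inv {F : Type*} [NormedAddCommGroup F]
    [NormedSpace ℂ F] {g h : ℂ → F} (hg : Differentiable ℂ g) (hh : ContinuousAt h 0)
    (hgh : ∀ z : ℂ, z ≠ 0 → g z = h z⁻¹) : g = Function.const ℂ (h 0) := by
  refine hg.eq_const_of_tendsto_cocompact ?_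
  rw [← Metric.cobounded_eq_cocompact]
  have hlim : Tendsto (fun z : ℂ => h z⁻¹) (Bornology.cobounded ℂ) (𝓝 (h 0)) :=
    hh.tendsto.comp tendsto_inv₀_cobounded
  refine hlim.congr' ?_
  filter_upwards [Bornology.eventually_ne_cobounded (0 : ℂ)] with z hz
  exact (hgh z hz).symm

theorem Continuous.eq_zero_of_forall_ne {X Y : Type*} [TopologicalSpace X] [TopologicalSpace Y]
    [T2Space Y] [Zero Y] {x : X} [(𝓝[≠] x).NeBot] {f : X → Y} (hf : Continuous f)
    (hfx : ∀ y, y ≠ x → f y = 0) : f = 0 :=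
  hf.ext_on (dense_compl_singleton x) continuous_const hfx

/-- There is no nonzero global holomorphic 1-form on the Riemann sphere:
if `f₀(z) = -z⁻² f₁(1/z)` for entire `f₀, f₁` then both vanish; hence the genus of
the sphere is `0`. -/
theorem genus_sphere_zero (f₀ f₁ : ℂ → ℂ)
    (h₀ : Differentiable ℂ f₀) (h₁ : Differentiable ℂ f₁)
    (h : ∀ z : ℂ, z ≠ 0 → f₀ z = -(z ^ (-2 : ℤ)) * f₁ (1 / z)) :
    f₀ = 0 ∧ f₁ = 0 := by
  set g : ℂ → ℂ := fun z => z ^ 2 * f₀ z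
  have hg_inv : ∀ z : ℂ, z ≠ 0 → g z = -f₁ z⁻¹ := by
    intro z hz
    simp only [g, h z hz, one_div, zpow_neg, zpow_ofNat]
    field_simp
  have hg : Differentiable ℂ g := (differentiable_pow 2).mul h₀
  have hg_const := hg.eq_const_of_eq_comp_inv h₁.continuous.neg.continuousAt hg_inv
  have hg_zero : ∀ z, g z = 0 := fun z =>
    calc g z = g 0 := by rw [hg_const]; rfl
      _ = 0 := by simp [g]
  refine ⟨h₀.continuous.eq_zero_of_forall_ne (x := 0) fun z hz => ?_,
    h₁.continuous.eq_zero_of_forall_ne (x := 0) fun w hw => ?_⟩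
  · simpa [g, hz] using hg_zero z
  · simpa [hw] using (hg_inv w⁻¹ (inv_ne_zero hw)).symm.trans (hg_zero w⁻¹)
end
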